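/- The profile tree T of an NBW A on an infinite word w is accepting if and only if A accepts w; that is, T has an infinite branch containing infinitely many F-classes iff A has an accepting run on w. -/

import Mathlib

/-!
Profile trees for Büchi determinization (Fisman–Kupferman–Vardi–Wilke style profiles).
Common definitions: nondeterministic Büchi word automata (NBW), the run DAG `G`,
profiles of nodes, and the pruned run DAG `G'`.
-/

/-- A nondeterministic Büchi word automaton `A = (Alph, Q, Qin, ρ, F)` with `Qin ∩ F = ∅`. -/
structure NBW (Alph Q : Type*) where
  Qin : Set Q
  ρ : Q → Alph → Set Q
  F : Set Q
  disj : Qin ∩ F = ∅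

variable {Alph Q : Type*} (A : NBW Alph Q) (w : ℕ → Alph)

/-- Lexicographic order `L₁ ≤ L₂` on profiles (lists over ℕ). -/
def lexLE (L₁ L₂ : List ℕ) : Prop :=
  List.Lex (· < ·) L₁ L₂ ∨ L₁ = L₂

/-- Strict lexicographic order `L₁ < L₂` on profiles. -/
def lexLT (L₁ L₂ : List ℕ) : Prop :=
  List.Lex (· < ·) L₁ L₂

open Classical in
/-- The profiles of all finite initial runs of `A` (on `w`) to the node `v = (q, i)`:
for each run `p₀,…,p_i` with `p₀ ∈ Qin`, `p_{j+1} ∈ ρ(p_j, w_j)` and `p_i = q`, the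
sequence of `F`-visitation labels `f(p₀,0) ⋯ f(p_i,i)` (where `f` is 1 on `F`-nodes, else 0). -/
def runProfiles (v : Q × ℕ) : Set (List ℕ) :=
  { L | ∃ p : ℕ → Q, p 0 ∈ A.Qin ∧ (∀ j < v.2, p (j + 1) ∈ A.ρ (p j) (w j)) ∧
        p v.2 = v.1 ∧ L = (List.range (v.2 + 1)).map (fun j => if p j ∈ A.F then 1 else 0) }

/-- `v` is a node of the run DAG `G = (V, E)` (equivalently of the pruned DAG `G'`):
there is a finite run of `A` to `v.1` on `w₀ ⋯ w_{v.2 - 1}`. -/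
def memV (v : Q × ℕ) : Prop := (runProfiles A w v).Nonempty

/-- `L` is the lexicographically maximal profile among all initial paths to `v`. -/
def IsMaxProfile (v : Q × ℕ) (L : List ℕ) : Prop :=
  L ∈ runProfiles A w v ∧ ∀ L' ∈ runProfiles A w v, lexLE L' L

open Classical in
/-- The profile `h_v` of a node `v`: the lexicographically maximal profile of an
initial path to `v` (junk value `[]` if `v` is not a node of the DAG). -/
noncomputable def profile (v : Q × ℕ) : List ℕ :=
  if h : ∃ L, IsMaxProfile A w v L then h.choose else []

/-- The edge relation `E` of the run DAG `G`: `E((q,i), (q',i+1))` iff `(q,i) ∈ V`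
and `q' ∈ ρ(q, w_i)`. -/
def edgeG (u v : Q × ℕ) : Prop :=
  memV A w u ∧ v.2 = u.2 + 1 ∧ v.1 ∈ A.ρ u.1 (w u.2)

/-- The edge relation `E'` of the pruned run DAG `G'`: `(u,v) ∈ E` and every
`E`-parent `u'` of `v` satisfies `h_{u'} ≤ h_u`. -/
def edgeG' (u v : Q × ℕ) : Prop :=
  edgeG A w u v ∧ ∀ u', edgeG A w u' v → lexLE (profile A w u') (profile A w u)

/-- `A` accepts `w`: some run visits `F` infinitely often. -/
def AcceptsNBW : Prop :=
  ∃ p : ℕ → Q, (p 0 ∈ A.Qin ∧ ∀ i, p (i + 1) ∈ A.ρ (p i) (w i)) ∧ ∀ n, ∃ i ≥ n, p i ∈ A.F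

/-- The equivalence class (under equality of profiles, levelwise) of a node `u` of `G'`. -/
def classOf (u : Q × ℕ) : Set (Q × ℕ) :=
  { v | memV A w v ∧ v.2 = u.2 ∧ profile A w v = profile A w u }

/-- `C` is a class (node) of the profile tree `T` on level `i`. -/
def ClassAt (C : Set (Q × ℕ)) (i : ℕ) : Prop :=
  ∃ u, memV A w u ∧ u.2 = i ∧ C = classOf A w u

/-- The child relation of the profile tree `T`: `[v]` is a child of `[u]`
whenever `(u, v) ∈ E'`. -/
def childC (C D : Set (Q × ℕ)) : Prop :=
  ∃ u v, edgeG' A w u v ∧ memV A w v ∧ C = classOf A w u ∧ D = classOf A w v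

/-- `D` is a descendant of `C` in `T`: there is a (possibly empty) path from `C` to `D`. -/
def DescC : Set (Q × ℕ) → Set (Q × ℕ) → Prop := Relation.ReflTransGen (childC A w)

/-- `C` is an `F`-class: all its members are `F`-nodes. -/
def IsFClass (C : Set (Q × ℕ)) : Prop := ∀ v ∈ C, v.1 ∈ A.F

/-- `h_C ≤ h_D` for classes `C`, `D` (members of a class all share one profile). -/
def profLE (C D : Set (Q × ℕ)) : Prop :=
  ∀ u ∈ C, ∀ v ∈ D, lexLE (profile A w u) (profile A w v)

/-- `h_C < h_D` for classes `C`, `D`. -/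
def profLT (C D : Set (Q × ℕ)) : Prop :=
  ∀ u ∈ C, ∀ v ∈ D, lexLT (profile A w u) (profile A w v)

/-- An infinite branch of `T`: a class on each level, consecutive ones related by the
child relation. -/
def IsBranch (b : ℕ → Set (Q × ℕ)) : Prop :=
  (∀ i, ClassAt A w (b i) i) ∧ ∀ i, childC A w (b i) (b (i + 1))

/-- The profile tree `T` is accepting: it has an infinite branch containing
infinitely many `F`-classes. -/
def TreeAccepting : Prop :=
  ∃ b : ℕ → Set (Q × ℕ), IsBranch A w b ∧ ∀ n, ∃ i ≥ n, IsFClass A (b i)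

/-!
A branch of `T` with infinitely many `F`-classes gives an accepting run by Kőnig's lemma: the
classes are finite, and every `G'`-parent of a node of a class on the branch lies in the
previous class of the branch.

Conversely, along an accepting run `p` the prefixes of length `i + 1` of the profiles
`h (p n, n)` increase with `n` and take finitely many values, so they stabilise to some `β i`.
The classes with profiles `β i` form a branch of `T`. If only finitely many of them were
`F`-classes, the `β i` would only append zeros from some level `n₀` on, and the profile of a
later `F`-node of the run, which agrees with `β n₀` up to level `n₀`, would exceed the limit.
-/

open Filter Set

namespace List

variable {α : Type*} [LinearOrder α]

theorem append_lt_append_of_lt_of_length_eq {L₁ L₂ : List α} (M₁ M₂ : List α)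
    (h : L₁ < L₂) (hl : L₁.length = L₂.length) : L₁ ++ M₁ < L₂ ++ M₂ := by
  induction L₁ generalizing L₂ with
  | nil => cases L₂ <;> simp_all
  | cons a L₁ ih =>
    cases L₂ with
    | nil => simp at hl
    | cons b L₂ =>
      simp only [cons_append, cons_lt_cons_iff, length_cons, Nat.add_right_cancel_iff] at h hl ⊢
      exact h.imp_right fun ⟨hab, hL⟩ => ⟨hab, ih hL hl⟩

theorem take_le_take_of_le {L M : List α} (h : L ≤ M) (hl : L.length = M.length) (k : ℕ) :
    L.take k ≤ M.take k := by
  refine not_lt.mp fun hlt => not_lt.mpr h ?_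
  simpa using append_lt_append_of_lt_of_length_eq (M.drop k) (L.drop k) hlt (by simp [hl])

theorem le_of_append_le_append_left {L M N : List α} (h : L ++ M ≤ L ++ N) : M ≤ N :=
  not_lt.mp fun hlt => not_lt.mpr h (append_left_lt hlt)

theorem replicate_bot_le [OrderBot α] (L : List α) : replicate L.length ⊥ ≤ L := by
  induction L with
  | nil => exact le_rfl
  | cons a L ih =>
    rcases eq_bot_or_bot_lt a with rfl | ha
    · rcases ih.lt_or_eq with hlt | heq
      · exact (cons_lt_cons_iff.mpr (Or.inr ⟨rfl, hlt⟩)).le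
      · rw [length_cons, replicate_succ, heq]
    · exact (cons_lt_cons_iff.mpr (Or.inl ha)).le

end List

theorem finite_setOf_length_le_forall_lt (n k : ℕ) :
    {L : List ℕ | L.length ≤ n ∧ ∀ a ∈ L, a < k}.Finite := by
  refine ((List.finite_length_le (Fin k) n).image (List.map Fin.val)).subset ?_
  rintro L ⟨hn, hk⟩
  exact ⟨L.pmap Fin.mk hk, by simpa using hn, by simp [List.map_pmap]⟩

theorem Monotone.exists_eventually_eq_of_finite_range {α : Type*} [PartialOrder α]
    {f : ℕ → α} (hf : Monotone f) (hfin : (range f).Finite) :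
    ∃ a, (∀ n, f n ≤ a) ∧ ∀ᶠ n in atTop, f n = a := by
  obtain ⟨_, ⟨N, rfl⟩, hmax⟩ := hfin.exists_maximal (range_nonempty f)
  have hge : ∀ n, N ≤ n → f n = f N := fun n hn =>
    (hmax ⟨n, rfl⟩ (hf hn)).antisymm (hf hn)
  refine ⟨f N, fun n => ?_, eventually_atTop.mpr ⟨N, hge⟩⟩
  exact (hf (le_max_left n N)).trans (hge _ (le_max_right n N)).le

/-- Kőnig's lemma, for a tree given by its finite levels `S i` and a parent map `g`. -/
theorem exists_seq_mem_of_mapsTo {β : Type*} {S : ℕ → Set β} (hfin : ∀ i, (S i).Finite)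
    (hne : ∀ i, (S i).Nonempty) {g : β → β} (hg : ∀ i, MapsTo g (S (i + 1)) (S i)) :
    ∃ f : ℕ → β, (∀ i, f i ∈ S i) ∧ ∀ i, g (f (i + 1)) = f i := by
  have hiter : ∀ d j, d ≤ j → MapsTo g^[d] (S j) (S (j - d)) := by
    intro d
    induction d with
    | zero => exact fun j _ => mapsTo_id (S j)
    | succ d ih =>
      intro j hdj
      rw [Function.iterate_succ']
      have hstep := hg (j - (d + 1))
      rw [show j - (d + 1) + 1 = j - d by omega] at hstep
      exact hstep.comp (ih j (by omega))
  have : Finite (S 0) := (hfin 0).to_subtype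
  have : ∀ i, Nonempty (S i) := fun i => (hne i).to_subtype
  obtain ⟨f, hf⟩ := exists_seq_forall_proj_of_forall_finite (α := fun i => S i)
    (fun {i j} hij a => ⟨g^[j - i] a,
      by simpa [Nat.sub_sub_self hij] using hiter (j - i) j (by omega) a.2⟩)
    (fun i a => by simp)
    (fun i j k hij hjk a => by
      simp only [Subtype.mk.injEq, ← Function.iterate_add_apply]
      congr 1; omega)
    (fun i _ => have := (hfin (i + 1)).to_subtype; Set.toFinite _)
  refine ⟨fun i => f i, fun i => (f i).2, fun i => ?_⟩
  simpa using congrArg Subtype.val (hf (Nat.le_succ i))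

open Classical in
/-- The label `f` of the paper, which depends on the state only. -/
noncomputable def NBW.label (q : Q) : ℕ := if q ∈ A.F then 1 else 0

def profileClass (i : ℕ) (L : List ℕ) : Set (Q × ℕ) :=
  {v | memV A w v ∧ v.2 = i ∧ profile A w v = L}

theorem classOf_eq_profileClass (u : Q × ℕ) :
    classOf A w u = profileClass A w u.2 (profile A w u) := rfl

def IsRun (p : ℕ → Q) : Prop := p 0 ∈ A.Qin ∧ ∀ i, p (i + 1) ∈ A.ρ (p i) (w i)

variable {A w}

theorem NBW.label_eq_one_iff {q : Q} : A.label q = 1 ↔ q ∈ A.F := by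
  unfold NBW.label; split_ifs <;> simp_all

theorem NBW.label_of_notMem {q : Q} (h : q ∉ A.F) : A.label q = 0 := if_neg h

theorem NBW.label_lt_two (q : Q) : A.label q < 2 := by
  unfold NBW.label; split_ifs <;> simp

theorem lexLE_iff_le {L M : List ℕ} : lexLE L M ↔ L ≤ M := or_comm

section RunProfiles

variable {u v : Q × ℕ} {L : List ℕ}

theorem mem_runProfiles_iff : L ∈ runProfiles A w v ↔ ∃ p : ℕ → Q, p 0 ∈ A.Qin ∧
    (∀ j < v.2, p (j + 1) ∈ A.ρ (p j) (w j)) ∧ p v.2 = v.1 ∧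
    L = (List.range (v.2 + 1)).map (A.label ∘ p) := Iff.rfl

theorem length_of_mem_runProfiles (h : L ∈ runProfiles A w v) : L.length = v.2 + 1 := by
  obtain ⟨p, -, -, -, rfl⟩ := mem_runProfiles_iff.mp h
  simp

theorem exists_eq_append_label_of_mem_runProfiles (h : L ∈ runProfiles A w v) :
    ∃ L', L = L' ++ [A.label v.1] := by
  obtain ⟨p, -, -, hpv, rfl⟩ := mem_runProfiles_iff.mp h
  exact ⟨_, by rw [List.range_succ, List.map_append, List.map_singleton, Function.comp, hpv]⟩

theorem runProfiles_subset :
    runProfiles A w v ⊆ {L | L.length ≤ v.2 + 1 ∧ ∀ a ∈ L, a < 2} := by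
  intro L h
  refine ⟨(length_of_mem_runProfiles h).le, ?_⟩
  obtain ⟨p, -, -, -, rfl⟩ := mem_runProfiles_iff.mp h
  simpa using fun j _ => A.label_lt_two (p j)

theorem mem_Qin_of_memV_zero (hv : memV A w v) (h0 : v.2 = 0) : v.1 ∈ A.Qin := by
  obtain ⟨L, p, hp0, -, hpv, -⟩ := hv
  rwa [← hpv, h0]

theorem append_label_mem_runProfiles (he : edgeG A w u v) (hL : L ∈ runProfiles A w u) :
    L ++ [A.label v.1] ∈ runProfiles A w v := by
  obtain ⟨p, hp0, hstep, hpu, rfl⟩ := mem_runProfiles_iff.mp hL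
  obtain ⟨-, hlev, hρ⟩ := he
  refine mem_runProfiles_iff.mpr
    ⟨Function.update p (u.2 + 1) v.1, ?_, fun j hj => ?_, by simp [hlev], ?_⟩
  · simpa using hp0
  · rcases (show j < u.2 ∨ j = u.2 by omega) with hj | rfl
    · rw [Function.update_of_ne (by omega), Function.update_of_ne (by omega)]
      exact hstep j hj
    · simpa [hpu] using hρ
  · rw [hlev, List.range_succ (n := u.2 + 1), List.map_append]
    congr 1
    · refine List.map_congr_left fun j hj => ?_
      simp [(by simpa using hj : j < u.2 + 1).ne]
    · simp

theorem edgeG.memV_right (he : edgeG A w u v) : memV A w v :=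
  ⟨_, append_label_mem_runProfiles he he.1.some_mem⟩

theorem exists_edgeG_of_mem_runProfiles {m : ℕ} (hv : v.2 = m + 1)
    (hL : L ∈ runProfiles A w v) :
    ∃ u, edgeG A w u v ∧ ∃ L' ∈ runProfiles A w u, L = L' ++ [A.label v.1] := by
  obtain ⟨p, hp0, hstep, hpv, rfl⟩ := mem_runProfiles_iff.mp hL
  have hL' : (List.range (m + 1)).map (A.label ∘ p) ∈ runProfiles A w (p m, m) :=
    ⟨p, hp0, fun j hj => hstep j (by omega), rfl, rfl⟩
  refine ⟨(p m, m), ⟨⟨_, hL'⟩, by simp [hv], ?_⟩, _, hL', ?_⟩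
  · simpa [hv, ← hpv] using hstep m (by omega)
  · rw [hv, List.range_succ, List.map_append, List.map_singleton, Function.comp, ← hv, hpv]

end RunProfiles

section Profiles

variable {u v : Q × ℕ} {L : List ℕ}

theorem isMaxProfile_profile (hv : memV A w v) : IsMaxProfile A w v (profile A w v) := by
  have hex : ∃ L, IsMaxProfile A w v L := by
    obtain ⟨L, hL, hmax⟩ := Set.exists_max_image _ id
      ((finite_setOf_length_le_forall_lt _ 2).subset runProfiles_subset) hv
    exact ⟨L, hL, fun L' hL' => lexLE_iff_le.mpr (hmax L' hL')⟩
  rw [profile, dif_pos hex]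
  exact hex.choose_spec

theorem profile_mem_runProfiles (hv : memV A w v) : profile A w v ∈ runProfiles A w v :=
  (isMaxProfile_profile hv).1

theorem le_profile (hL : L ∈ runProfiles A w v) : L ≤ profile A w v :=
  lexLE_iff_le.mp ((isMaxProfile_profile ⟨L, hL⟩).2 L hL)

theorem length_profile (hv : memV A w v) : (profile A w v).length = v.2 + 1 :=
  length_of_mem_runProfiles (profile_mem_runProfiles hv)

theorem exists_profile_eq_append_label (hv : memV A w v) :
    ∃ L, profile A w v = L ++ [A.label v.1] :=
  exists_eq_append_label_of_mem_runProfiles (profile_mem_runProfiles hv)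

theorem edgeG.profile_append_label_le (he : edgeG A w u v) :
    profile A w u ++ [A.label v.1] ≤ profile A w v :=
  le_profile (append_label_mem_runProfiles he (profile_mem_runProfiles he.1))

/-- The maximal run to `v` passes through some parent `u`; as the profile of every parent
extends to a run profile of `v`, `u` has the largest profile among the parents. -/
theorem exists_edgeG'_profile_eq_append {m : ℕ} (hv : memV A w v) (hm : v.2 = m + 1) :
    ∃ u, edgeG' A w u v ∧ profile A w v = profile A w u ++ [A.label v.1] := by
  obtain ⟨u, he, L, hL, hvL⟩ := exists_edgeG_of_mem_runProfiles hm (profile_mem_runProfiles hv)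
  have hle : ∀ u', edgeG A w u' v → profile A w u' ≤ L := by
    intro u' he'
    have hlen : (profile A w u').length = L.length := by
      rw [length_profile he'.1, length_of_mem_runProfiles hL]
      have := he.2.1; have := he'.2.1; omega
    have := List.take_le_take_of_le (hvL ▸ he'.profile_append_label_le) (by simp [hlen]) L.length
    rwa [List.take_left' hlen, List.take_left' rfl] at this
  have hLu : L = profile A w u := (le_profile hL).antisymm (hle u he)
  exact ⟨u, ⟨he, fun u' he' => lexLE_iff_le.mpr (hLu ▸ hle u' he')⟩, hLu ▸ hvL⟩

theorem edgeG'.profile_eq_append (he : edgeG' A w u v) :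
    profile A w v = profile A w u ++ [A.label v.1] := by
  obtain ⟨u₀, he₀, hv⟩ := exists_edgeG'_profile_eq_append he.1.memV_right he.1.2.1
  rw [hv, (lexLE_iff_le.mp (he.2 u₀ he₀.1)).antisymm (lexLE_iff_le.mp (he₀.2 u he.1))]

theorem exists_profile_eq_take {k : ℕ} {x : Q × ℕ} (hx : memV A w x) (hk : k ≤ x.2) :
    ∃ u, memV A w u ∧ u.2 = k ∧ profile A w u = (profile A w x).take (k + 1) := by
  obtain ⟨q, n⟩ := x
  change k ≤ n at hk
  induction n, hk using Nat.le_induction generalizing q with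
  | base => exact ⟨(q, k), hx, rfl, (List.take_of_length_le (length_profile hx).le).symm⟩
  | succ n hkn ih =>
    obtain ⟨u', he', hprof⟩ := exists_edgeG'_profile_eq_append hx rfl
    obtain ⟨q', n'⟩ := u'
    obtain rfl : n' = n := by have := he'.1.2.1; simp_all
    obtain ⟨u, hu, hlev, hu'⟩ := ih q' he'.1.1
    refine ⟨u, hu, hlev, ?_⟩
    rw [hu', hprof, List.take_append_of_le_length (by rw [length_profile he'.1.1]; omega)]

end Profiles

section Classes

variable {u v u' v' : Q × ℕ}

theorem label_eq_of_profile_eq (hu : memV A w u) (hv : memV A w v)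
    (h : profile A w u = profile A w v) : A.label u.1 = A.label v.1 := by
  obtain ⟨L, hL⟩ := exists_profile_eq_append_label hu
  obtain ⟨M, hM⟩ := exists_profile_eq_append_label hv
  simpa using congrArg List.getLast? (hL.symm.trans (h.trans hM))

theorem isFClass_classOf (hu : memV A w u) (hF : u.1 ∈ A.F) : IsFClass A (classOf A w u) := by
  rintro x ⟨hx, -, hxu⟩
  rw [← NBW.label_eq_one_iff] at hF ⊢
  rw [label_eq_of_profile_eq hx hu hxu, hF]

theorem mem_classOf_of_edgeG' (he : edgeG' A w u v) (he' : edgeG' A w u' v')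
    (hv' : v' ∈ classOf A w v) : u' ∈ classOf A w u := by
  obtain ⟨-, hlev, hprof⟩ := hv'
  have hlev' : u'.2 = u.2 := by have := he.1.2.1; have := he'.1.2.1; omega
  refine ⟨he'.1.1, hlev', ?_⟩
  have := he'.profile_eq_append.symm.trans (hprof.trans he.profile_eq_append)
  exact (List.append_inj this (by rw [length_profile he'.1.1, length_profile he.1.1, hlev'])).1

end Classes

section BranchToRun

variable {b : ℕ → Set (Q × ℕ)}

theorem IsBranch.memV_of_mem (hb : IsBranch A w b) {i : ℕ} {x : Q × ℕ} (hx : x ∈ b i) :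
    memV A w x ∧ x.2 = i := by
  obtain ⟨u, -, rfl, hbu⟩ := hb.1 i
  rw [hbu] at hx
  exact ⟨hx.1, hx.2.1⟩

theorem IsBranch.nonempty (hb : IsBranch A w b) (i : ℕ) : (b i).Nonempty := by
  obtain ⟨u, hu, -, hbu⟩ := hb.1 i
  exact ⟨u, hbu ▸ ⟨hu, rfl, rfl⟩⟩

theorem IsBranch.mem_of_edgeG' (hb : IsBranch A w b) {i : ℕ} {u y : Q × ℕ}
    (hy : y ∈ b (i + 1)) (he : edgeG' A w u y) : u ∈ b i := by
  obtain ⟨u₀, v₀, he₀, -, hu₀, hv₀⟩ := hb.2 i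
  exact hu₀ ▸ mem_classOf_of_edgeG' he₀ he (hv₀ ▸ hy)

theorem acceptsNBW_of_treeAccepting [Finite Q] (h : TreeAccepting A w) : AcceptsNBW A w := by
  obtain ⟨b, hb, hF⟩ := h
  have : Nonempty (Q × ℕ) := ⟨(hb.nonempty 0).some⟩
  let parent : Q × ℕ → Q × ℕ := fun y => Classical.epsilon (edgeG' A w · y)
  have hparent : ∀ i, ∀ y ∈ b (i + 1), edgeG' A w (parent y) y := by
    intro i y hy
    obtain ⟨hy, hlev⟩ := hb.memV_of_mem hy
    obtain ⟨u, he, -⟩ := exists_edgeG'_profile_eq_append hy hlev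
    exact Classical.epsilon_spec (p := (edgeG' A w · y)) ⟨u, he⟩
  have hfin : ∀ i, (b i).Finite := fun i => (finite_range fun q : Q => (q, i)).subset
    fun x hx => ⟨x.1, by rw [← (hb.memV_of_mem hx).2]⟩
  obtain ⟨f, hfb, hff⟩ := exists_seq_mem_of_mapsTo hfin hb.nonempty
    fun i y hy => hb.mem_of_edgeG' hy (hparent i y hy)
  refine ⟨fun i => (f i).1, ⟨?_, fun i => ?_⟩, fun n => ?_⟩
  · exact mem_Qin_of_memV_zero (hb.memV_of_mem (hfb 0)).1 (hb.memV_of_mem (hfb 0)).2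
  · have he := hff i ▸ hparent i _ (hfb (i + 1))
    simpa [(hb.memV_of_mem (hfb i)).2] using he.1.2.2
  · obtain ⟨i, hi, hFi⟩ := hF n
    exact ⟨i, hi, hFi _ (hfb i)⟩

end BranchToRun

theorem finite_range_take_profile {x : ℕ → Q × ℕ} (hx : ∀ n, memV A w (x n)) (k : ℕ) :
    (range fun n => (profile A w (x n)).take k).Finite := by
  refine (finite_setOf_length_le_forall_lt k 2).subset ?_
  rintro _ ⟨n, rfl⟩
  exact ⟨List.length_take_le _ _, fun a ha =>
    (runProfiles_subset (profile_mem_runProfiles (hx n))).2 a (List.mem_of_mem_take ha)⟩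

namespace IsRun

variable {p : ℕ → Q} (hp : IsRun A w p)
include hp

theorem memV (n : ℕ) : memV A w (p n, n) := ⟨_, p, hp.1, fun j _ => hp.2 j, rfl, rfl⟩

theorem monotone_take_profile (k : ℕ) : Monotone fun n => (profile A w (p n, n)).take k := by
  refine monotone_nat_of_le_succ fun n => ?_
  have he : edgeG A w (p n, n) (p (n + 1), n + 1) := ⟨hp.memV n, rfl, hp.2 n⟩
  calc (profile A w (p n, n)).take k
      ≤ (profile A w (p n, n) ++ [A.label (p (n + 1))]).take k :=
        not_lt.mp (List.not_lt.mpr ((List.prefix_append _ _).take k).le)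
    _ ≤ (profile A w (p (n + 1), n + 1)).take k :=
        List.take_le_take_of_le he.profile_append_label_le
          (by simp [length_profile (hp.memV n), length_profile (hp.memV (n + 1))]) k

theorem exists_limit_profile : ∃ β : ℕ → List ℕ,
    (∀ i n, (profile A w (p n, n)).take (i + 1) ≤ β i) ∧
      ∀ i, ∀ᶠ n in atTop, (profile A w (p n, n)).take (i + 1) = β i := by
  choose β hle hβ using fun i =>
    (hp.monotone_take_profile (i + 1)).exists_eventually_eq_of_finite_range
      (finite_range_take_profile hp.memV (i + 1))
  exact ⟨β, hle, hβ⟩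

end IsRun

section RunToBranch

variable {p : ℕ → Q} {β : ℕ → List ℕ} (hp : IsRun A w p)
  (hβ : ∀ i, ∀ᶠ n in atTop, (profile A w (p n, n)).take (i + 1) = β i)
include hp hβ

theorem exists_edgeG'_profile_eq_limit (i : ℕ) : ∃ u v, edgeG' A w u v ∧ u.2 = i ∧
    profile A w u = β i ∧ profile A w v = β (i + 1) := by
  obtain ⟨n, hni, hni', hn⟩ :=
    ((hβ i).and ((hβ (i + 1)).and (eventually_ge_atTop (i + 1)))).exists
  obtain ⟨v, hv, hvlev, hvprof⟩ := exists_profile_eq_take (hp.memV n) hn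
  obtain ⟨u, he, hprof⟩ := exists_edgeG'_profile_eq_append hv hvlev
  have hulev : u.2 = i := by have := he.1.2.1; omega
  refine ⟨u, v, he, hulev, ?_, hvprof.trans hni'⟩
  calc profile A w u = (profile A w v).take (i + 1) := by
        rw [hprof, List.take_left' (by rw [length_profile he.1.1, hulev])]
    _ = β i := by rw [hvprof, List.take_take, min_eq_left (by omega), hni]

theorem isBranch_limit : IsBranch A w fun i => profileClass A w i (β i) := by
  refine ⟨fun i => ?_, fun i => ?_⟩
  · obtain ⟨u, v, he, hu, hpu, -⟩ := exists_edgeG'_profile_eq_limit hp hβ i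
    exact ⟨u, he.1.1, hu, by rw [classOf_eq_profileClass, hu, hpu]⟩
  · obtain ⟨u, v, he, hu, hpu, hpv⟩ := exists_edgeG'_profile_eq_limit hp hβ i
    refine ⟨u, v, he, he.1.memV_right, by rw [classOf_eq_profileClass, hu, hpu], ?_⟩
    rw [classOf_eq_profileClass, he.1.2.1, hu, hpv]

theorem frequently_isFClass_limit (hle : ∀ i n, (profile A w (p n, n)).take (i + 1) ≤ β i)
    (hF : ∀ n, ∃ i ≥ n, p i ∈ A.F) :
    ∀ n, ∃ i ≥ n, IsFClass A (profileClass A w i (β i)) := by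
  by_contra! ⟨n₀, hn₀⟩
  have hβsucc : ∀ i ≥ n₀, β (i + 1) = β i ++ [0] := by
    intro i hi
    obtain ⟨u, v, he, hu, hpu, hpv⟩ := exists_edgeG'_profile_eq_limit hp hβ i
    have hvF : v.1 ∉ A.F := fun hvF => hn₀ (i + 1) (by omega) <| by
      simpa [classOf_eq_profileClass, he.1.2.1, hu, hpv] using isFClass_classOf he.1.memV_right hvF
    rw [← hpv, ← hpu, he.profile_eq_append, NBW.label_of_notMem hvF]
  have hβrep : ∀ k, β (n₀ + k) = β n₀ ++ List.replicate k 0 := by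
    intro k
    induction k with
    | zero => simp
    | succ k ih =>
      rw [← add_assoc, hβsucc _ (by omega), ih, List.replicate_succ', List.append_assoc]
  obtain ⟨n, hpn, hpre, hn⟩ := ((Filter.frequently_atTop.mpr hF).and_eventually
    ((hβ n₀).and (eventually_gt_atTop n₀))).exists
  have hprof : profile A w (p n, n) = β n := by
    set γ := (profile A w (p n, n)).drop (n₀ + 1)
    have hsplit : profile A w (p n, n) = β n₀ ++ γ := by rw [← hpre, List.take_append_drop]
    have hlen : γ.length = n - n₀ := by simp [γ, length_profile (hp.memV n)]
    have hβn : β n = β n₀ ++ List.replicate γ.length 0 := by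
      rw [hlen, ← hβrep, Nat.add_sub_cancel' hn.le]
    have hγ : γ ≤ List.replicate γ.length 0 := by
      refine List.le_of_append_le_append_left (L := β n₀) ?_
      rw [← hsplit, ← hβn]
      simpa [List.take_of_length_le (length_profile (hp.memV n)).le] using hle n n
    rw [hβn, hsplit, ← hγ.antisymm (by simpa using List.replicate_bot_le γ)]
  refine hn₀ n hn.le ?_
  simpa [classOf_eq_profileClass, hprof] using isFClass_classOf (hp.memV n) hpn

end RunToBranch

theorem treeAccepting_of_acceptsNBW (h : AcceptsNBW A w) : TreeAccepting A w := by
  obtain ⟨p, hp, hF⟩ := h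
  replace hp : IsRun A w p := hp
  obtain ⟨β, hle, hβ⟩ := hp.exists_limit_profile
  exact ⟨_, isBranch_limit hp hβ, frequently_isFClass_limit hp hβ hle hF⟩

theorem tree_accepting_iff_accepts_general [Fintype Q]
    (A : NBW Alph Q) (w : ℕ → Alph) :
    TreeAccepting A w ↔ AcceptsNBW A w :=
  ⟨acceptsNBW_of_treeAccepting, treeAccepting_of_acceptsNBW⟩

/-- Theorem: the profile tree is accepting iff `A` accepts `w`. -/
theorem tree_accepting_iff_accepts [Fintype Alph] [Fintype Q]
    (A : NBW Alph Q) (w : ℕ → Alph) :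
    TreeAccepting A w ↔ AcceptsNBW A w :=
  tree_accepting_iff_accepts_general A w
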